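/- Let (X, ω) be a symplectic vector space over 𝕂 ∈ {ℝ, ℂ}, let (λ, μ) be a Fredholm pair of Lagrangian subspaces of index 0, and let V be a finite-dimensional subspace of X. Define λ₀ := λ ∩ (V + μ), λ₁ := V^ω ∩ λ, μ₀ := μ ∩ (V + λ), μ₁ := V^ω ∩ μ, X₀ := (V + λ) ∩ (V + μ), X₁ := λ₁ + μ₁. Assume X = V + λ₁ + μ and V ∩ λ = V ∩ μ = {0}. Then: (a) X₀ = X₁^ω and X₁ = X₀^ω; (b) X₀ = V ⊕ λ₀ = V ⊕ μ₀, X₁ = λ₁ ⊕ μ₁, dim V = dim λ₀ = dim μ₀ = (dim X₀)/2, and X = X₀ ⊕ X₁; (c) λ = λ₀ ⊕ λ₁, μ = μ₀ ⊕ μ₁, the restrictions of ω to X₀ and to X₁ are symplectic forms, λ₀ and μ₀ are Lagrangian subspaces of (X₀, ω|_{X₀}) (i.e. λ₀ = {z ∈ X₀ : ω(z, w) = 0 for all w ∈ λ₀} and likewise for μ₀), and λ₁ and μ₁ are Lagrangian subspaces of (X₁, ω|_{X₁}). -/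
import Mathlib


/-- The ω-annihilator of a linear subspace:
`V^ω = {x ∈ X : ω(x, y) = 0 for all y ∈ V}`. -/
def omegaAnn {𝕂 : Type*} [Field 𝕂] {X : Type*} [AddCommGroup X] [Module 𝕂 X]
    (ω : X →ₗ[𝕂] X →ₗ[𝕂] 𝕂) (V : Submodule 𝕂 X) : Submodule 𝕂 X where
  carrier := {x | ∀ y ∈ V, ω x y = 0}
  zero_mem' := by intro y hy; simp
  add_mem' := by
    intro a b ha hb y hy
    simp only [map_add, LinearMap.add_apply, ha y hy, hb y hy, add_zero]
  smul_mem' := by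
    intro c a ha y hy
    simp only [map_smul, LinearMap.smul_apply, ha y hy, smul_zero]


lemma mem_omegaAnn {𝕂 : Type*} [Field 𝕂] {X : Type*} [AddCommGroup X] [Module 𝕂 X]
    {ω : X →ₗ[𝕂] X →ₗ[𝕂] 𝕂} {V : Submodule 𝕂 X} {x : X} :
    x ∈ omegaAnn ω V ↔ ∀ y ∈ V, ω x y = 0 := Iff.rfl

lemma finrank_decomp {K M : Type*} [Field K] [AddCommGroup M] [Module K M]
    (p r : Submodule K M) (h1 : FiniteDimensional K ↥(p.map r.mkQ))
    (h2 : FiniteDimensional K ↥(p ⊓ r)) :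
    FiniteDimensional K ↥p ∧
    Module.finrank K ↥p
      = Module.finrank K ↥(p.map r.mkQ) + Module.finrank K ↥(p ⊓ r) := by
  set f := r.mkQ.domRestrict p with hf
  have hker : LinearMap.ker f = Submodule.comap p.subtype (p ⊓ r) := by
    rw [hf, LinearMap.ker_domRestrict, Submodule.ker_mkQ]
    ext x
    simp only [Submodule.mem_comap, Submodule.mem_inf]
    exact ⟨fun h => ⟨x.2, h⟩, fun h => h.2⟩
  have e : ↥(LinearMap.ker f) ≃ₗ[K] ↥(p ⊓ r) :=
    (LinearEquiv.ofEq _ _ hker).trans (Submodule.comapSubtypeEquivOfLe inf_le_left)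
  have hrange : LinearMap.range f = p.map r.mkQ := LinearMap.range_domRestrict _ _
  haveI : FiniteDimensional K ↥(LinearMap.ker f) := e.symm.finiteDimensional
  haveI : FiniteDimensional K ↥(LinearMap.range f) := hrange ▸ h1
  haveI : FiniteDimensional K (↥p ⧸ LinearMap.ker f) :=
    (f.quotKerEquivRange).symm.finiteDimensional
  haveI hfp : FiniteDimensional K ↥p := by
    have := (isNoetherian_iff_submodule_quotient (LinearMap.ker f)).mpr
      ⟨IsNoetherian.iff_fg.2 ‹_›, IsNoetherian.iff_fg.2 ‹_›⟩
    exact IsNoetherian.iff_fg.1 this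
  refine ⟨hfp, ?_⟩
  have h3 := LinearMap.finrank_range_add_finrank_ker f
  rw [hrange] at h3
  have h4 : Module.finrank K ↥(LinearMap.ker f) = Module.finrank K ↥(p ⊓ r) :=
    e.finrank_eq
  omega

open Module Submodule

lemma fd_map {K M N : Type*} [Field K] [AddCommGroup M] [Module K M]
    [AddCommGroup N] [Module K N] (p : Submodule K M) (f : M →ₗ[K] N)
    [FiniteDimensional K ↥p] : FiniteDimensional K ↥(p.map f) :=
  Module.Finite.iff_fg.mpr (Submodule.FG.map f (Module.Finite.iff_fg.mp ‹_›))


/-- Decomposition proposition: let `(X, ω)` be a symplectic vector space over `𝕂 ∈ {ℝ, ℂ}`,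
`(l, m)` a Fredholm pair of Lagrangian subspaces of index `0`, and `V` a finite-dimensional
subspace. Define `l₀ = l ∩ (V + m)`, `l₁ = V^ω ∩ l`, `m₀ = m ∩ (V + l)`, `m₁ = V^ω ∩ m`,
`X₀ = (V + l) ∩ (V + m)`, `X₁ = l₁ + m₁`. Assume `X = V + l₁ + m` and
`V ∩ l = V ∩ m = {0}`. Then (a) `X₀ = X₁^ω` and `X₁ = X₀^ω`;
(b) `X₀ = V ⊕ l₀ = V ⊕ m₀`, `X₁ = l₁ ⊕ m₁`, `dim V = dim l₀ = dim m₀ = (dim X₀)/2`, and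
`X = X₀ ⊕ X₁`; (c) `l = l₀ ⊕ l₁`, `m = m₀ ⊕ m₁`, the restriction of `ω` to `X₀` and to `X₁`
is symplectic (nondegenerate), `l₀`, `m₀` are Lagrangian in `X₀` and `l₁`, `m₁` are
Lagrangian in `X₁`. -/
theorem decomposition
    {𝕂 : Type*} [RCLike 𝕂] {X : Type*} [AddCommGroup X] [Module 𝕂 X]
    (ω : X →ₗ[𝕂] X →ₗ[𝕂] 𝕂)
    (hskew : ∀ x y, ω x y = - ω y x)
    (hnondeg : ∀ x, (∀ y, ω x y = 0) → x = 0)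
    (l m : Submodule 𝕂 X)
    (hl : omegaAnn ω l = l) (hm : omegaAnn ω m = m)
    (hfin₁ : FiniteDimensional 𝕂 ↥(l ⊓ m))
    (hfin₂ : FiniteDimensional 𝕂 (X ⧸ (l ⊔ m)))
    (hindex : Module.finrank 𝕂 ↥(l ⊓ m) = Module.finrank 𝕂 (X ⧸ (l ⊔ m)))
    (V : Submodule 𝕂 X) (hVfin : FiniteDimensional 𝕂 ↥V)
    (l₀ l₁ m₀ m₁ X₀ X₁ : Submodule 𝕂 X)
    (hl₀ : l₀ = l ⊓ (V ⊔ m)) (hl₁ : l₁ = omegaAnn ω V ⊓ l)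
    (hm₀ : m₀ = m ⊓ (V ⊔ l)) (hm₁ : m₁ = omegaAnn ω V ⊓ m)
    (hX₀ : X₀ = (V ⊔ l) ⊓ (V ⊔ m)) (hX₁ : X₁ = l₁ ⊔ m₁)
    (hspan : V ⊔ l₁ ⊔ m = ⊤)
    (hVl : V ⊓ l = ⊥) (hVm : V ⊓ m = ⊥) :
    -- (a)
    (X₀ = omegaAnn ω X₁ ∧ X₁ = omegaAnn ω X₀)
    -- (b)
    ∧ (V ⊔ l₀ = X₀ ∧ V ⊓ l₀ = ⊥
      ∧ V ⊔ m₀ = X₀ ∧ V ⊓ m₀ = ⊥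
      ∧ l₁ ⊓ m₁ = ⊥
      ∧ Module.rank 𝕂 ↥V = Module.rank 𝕂 ↥l₀
      ∧ Module.rank 𝕂 ↥V = Module.rank 𝕂 ↥m₀
      ∧ Module.rank 𝕂 ↥X₀ = 2 * Module.rank 𝕂 ↥V
      ∧ X₀ ⊔ X₁ = ⊤ ∧ X₀ ⊓ X₁ = ⊥)
    -- (c)
    ∧ (l₀ ⊔ l₁ = l ∧ l₀ ⊓ l₁ = ⊥
      ∧ m₀ ⊔ m₁ = m ∧ m₀ ⊓ m₁ = ⊥
      ∧ (∀ x ∈ X₀, (∀ y ∈ X₀, ω x y = 0) → x = 0)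
      ∧ (∀ x ∈ X₁, (∀ y ∈ X₁, ω x y = 0) → x = 0)
      ∧ omegaAnn ω l₀ ⊓ X₀ = l₀ ∧ omegaAnn ω m₀ ⊓ X₀ = m₀
      ∧ omegaAnn ω l₁ ⊓ X₁ = l₁ ∧ omegaAnn ω m₁ ⊓ X₁ = m₁) := by
  haveI := hVfin
  haveI := hfin₁
  haveI := hfin₂
  -- basic pointwise facts
  have hsk0 : ∀ {x y : X}, ω x y = 0 → ω y x = 0 := by
    intro x y h; rw [hskew]; simp [h]
  have hlmem : ∀ {x : X}, x ∈ l ↔ ∀ y ∈ l, ω x y = 0 := by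
    intro x; conv_lhs => rw [← hl]
    exact mem_omegaAnn
  have hmmem : ∀ {x : X}, x ∈ m ↔ ∀ y ∈ m, ω x y = 0 := by
    intro x; conv_lhs => rw [← hm]
    exact mem_omegaAnn
  -- inclusions
  have hl1l : l₁ ≤ l := hl₁ ▸ inf_le_right
  have hl1V : ∀ {x}, x ∈ l₁ → ∀ y ∈ V, ω x y = 0 := by
    intro x hx; exact mem_omegaAnn.mp ((hl₁ ▸ hx : x ∈ omegaAnn ω V ⊓ l)).1
  have hm1m : m₁ ≤ m := hm₁ ▸ inf_le_right
  have hm1V : ∀ {x}, x ∈ m₁ → ∀ y ∈ V, ω x y = 0 := by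
    intro x hx; exact mem_omegaAnn.mp ((hm₁ ▸ hx : x ∈ omegaAnn ω V ⊓ m)).1
  have hl0l : l₀ ≤ l := hl₀ ▸ inf_le_left
  have hl0Vm : l₀ ≤ V ⊔ m := hl₀ ▸ inf_le_right
  have hm0m : m₀ ≤ m := hm₀ ▸ inf_le_left
  have hm0Vl : m₀ ≤ V ⊔ l := hm₀ ▸ inf_le_right
  -- decomposition of any element
  have hdec : ∀ x : X, ∃ v ∈ V, ∃ a ∈ l₁, ∃ b ∈ m, x = v + a + b := by
    intro x
    have hx : x ∈ V ⊔ l₁ ⊔ m := by rw [hspan]; trivial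
    rcases Submodule.mem_sup.mp hx with ⟨y, hy, b, hb, rfl⟩
    rcases Submodule.mem_sup.mp hy with ⟨v, hv, a, ha, rfl⟩
    exact ⟨v, hv, a, ha, b, hb, rfl⟩
  have hkill : ∀ x : X, (∀ y ∈ V, ω x y = 0) → (∀ y ∈ l₁, ω x y = 0) →
      (∀ y ∈ m, ω x y = 0) → x = 0 := by
    intro x h1 h2 h3
    apply hnondeg; intro y
    obtain ⟨v, hv, a, ha, b, hb, rfl⟩ := hdec y
    simp only [map_add, h1 v hv, h2 a ha, h3 b hb, add_zero]
  -- l = l₀ ⊔ l₁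
  have hlsum : l₀ ⊔ l₁ = l := by
    refine le_antisymm (sup_le hl0l hl1l) ?_
    intro x hx
    obtain ⟨v, hv, a, ha, b, hb, rfl⟩ := hdec x
    have h1 : v + a + b - a ∈ l := sub_mem hx (hl1l ha)
    have h2 : v + a + b - a ∈ V ⊔ m := by
      have : v + a + b - a = v + b := by abel
      rw [this]; exact Submodule.mem_sup.mpr ⟨v, hv, b, hb, rfl⟩
    have h3 : v + a + b - a ∈ l₀ := by rw [hl₀]; exact ⟨h1, h2⟩
    have h4 : v + a + b = (v + a + b - a) + a := by abel
    rw [h4]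
    exact Submodule.mem_sup.mpr ⟨_, h3, a, ha, rfl⟩
  -- X₀ basic
  have hX0V : V ≤ X₀ := hX₀ ▸ le_inf le_sup_left le_sup_left
  have hX0l0 : l₀ ≤ X₀ := hX₀ ▸ le_inf (le_trans hl0l le_sup_right) hl0Vm
  have hX0m0 : m₀ ≤ X₀ := hX₀ ▸ le_inf hm0Vl (le_trans hm0m le_sup_right)
  have hVl0sup : V ⊔ l₀ = X₀ := by
    refine le_antisymm (sup_le hX0V hX0l0) ?_
    intro x hx
    rw [hX₀] at hx
    obtain ⟨v, hv, a, ha, hva⟩ := Submodule.mem_sup.mp hx.1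
    obtain ⟨v', hv', b, hb, hvb⟩ := Submodule.mem_sup.mp hx.2
    have hal : a ∈ l₀ := by
      rw [hl₀]
      refine ⟨ha, ?_⟩
      have : a = (v' - v) + b := by
        have h : v + a = v' + b := by rw [hva, hvb]
        calc a = (v + a) - v := by abel
        _ = (v' + b) - v := by rw [h]
        _ = (v' - v) + b := by abel
      rw [this]
      exact Submodule.mem_sup.mpr ⟨v' - v, sub_mem hv' hv, b, hb, rfl⟩
    exact Submodule.mem_sup.mpr ⟨v, hv, a, hal, hva⟩
  have hVm0sup : V ⊔ m₀ = X₀ := by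
    refine le_antisymm (sup_le hX0V hX0m0) ?_
    intro x hx
    rw [hX₀] at hx
    obtain ⟨v, hv, a, ha, hva⟩ := Submodule.mem_sup.mp hx.1
    obtain ⟨v', hv', b, hb, hvb⟩ := Submodule.mem_sup.mp hx.2
    have hbm : b ∈ m₀ := by
      rw [hm₀]
      refine ⟨hb, ?_⟩
      have : b = (v - v') + a := by
        have h : v + a = v' + b := by rw [hva, hvb]
        calc b = (v' + b) - v' := by abel
        _ = (v + a) - v' := by rw [h]
        _ = (v - v') + a := by abel
      rw [this]
      exact Submodule.mem_sup.mpr ⟨v - v', sub_mem hv hv', a, ha, rfl⟩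
    exact Submodule.mem_sup.mpr ⟨v', hv', b, hbm, hvb⟩
  have hVl0inf : V ⊓ l₀ = ⊥ := by
    rw [eq_bot_iff, ← hVl]; exact inf_le_inf_left V hl0l
  have hVm0inf : V ⊓ m₀ = ⊥ := by
    rw [eq_bot_iff, ← hVm]; exact inf_le_inf_left V hm0m
  -- m₀ ⊓ m₁ = ⊥ (pointwise)
  have hm0m1 : m₀ ⊓ m₁ = ⊥ := by
    rw [eq_bot_iff]
    intro x hx
    obtain ⟨hx0, hx1⟩ := hx
    obtain ⟨v, hv, a, ha, hva⟩ := Submodule.mem_sup.mp (hm0Vl hx0)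
    have : x = 0 := by
      apply hkill
      · exact hm1V hx1
      · intro y hy
        rw [← hva, map_add, LinearMap.add_apply]
        have h1 : ω a y = 0 := hlmem.mp ha y (hl1l hy)
        have h2 : ω v y = 0 := hsk0 (hl1V hy v hv)
        rw [h1, h2, add_zero]
      · exact hmmem.mp (hm0m hx0)
    simp [this]
  -- X₀ annihilates l₁ and m₁
  have hX0l1 : ∀ x ∈ X₀, ∀ y ∈ l₁, ω x y = 0 := by
    intro x hx y hy
    obtain ⟨v, hv, a, ha, hva⟩ := Submodule.mem_sup.mp ((hX₀ ▸ hx : _ ∧ _).1)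
    rw [← hva, map_add, LinearMap.add_apply]
    rw [hsk0 (hl1V hy v hv), hlmem.mp ha y (hl1l hy), add_zero]
  have hX0m1 : ∀ x ∈ X₀, ∀ y ∈ m₁, ω x y = 0 := by
    intro x hx y hy
    obtain ⟨v, hv, b, hb, hvb⟩ := Submodule.mem_sup.mp ((hX₀ ▸ hx : _ ∧ _).2)
    rw [← hvb, map_add, LinearMap.add_apply]
    rw [hsk0 (hm1V hy v hv), hmmem.mp hb y (hm1m hy), add_zero]
  have hX0X1 : ∀ x ∈ X₀, ∀ y ∈ X₁, ω x y = 0 := by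
    intro x hx y hy
    obtain ⟨a, ha, b, hb, hab⟩ := Submodule.mem_sup.mp (hX₁ ▸ hy : y ∈ l₁ ⊔ m₁)
    rw [← hab, map_add, hX0l1 x hx a ha, hX0m1 x hx b hb, add_zero]
  have hX1X0 : ∀ x ∈ X₁, ∀ y ∈ X₀, ω x y = 0 := fun x hx y hy =>
    hsk0 (hX0X1 y hy x hx)
  -- X₀ membership split
  have hX0split : ∀ {x : X}, x ∈ X₀ → x ∈ V ⊔ l ∧ x ∈ V ⊔ m := by
    intro x hx; rw [hX₀] at hx; exact ⟨hx.1, hx.2⟩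
  -- dimension machinery
  have hVsup : V ⊔ (l ⊔ m) = ⊤ := by
    rw [eq_top_iff, ← hspan]
    refine sup_le (sup_le le_sup_left ?_) ?_
    · exact le_trans hl1l (le_trans le_sup_left le_sup_right)
    · exact le_trans le_sup_right le_sup_right
  haveI hfinVs : FiniteDimensional 𝕂 ↥(V ⊓ (l ⊔ m)) :=
    Submodule.finiteDimensional_of_le inf_le_left
  have hVtop : V.map (l ⊔ m).mkQ = ⊤ := by
    have h1 : (V ⊔ (l ⊔ m)).map (l ⊔ m).mkQ = ⊤ := by
      rw [hVsup, Submodule.map_top, Submodule.range_mkQ]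
    rw [Submodule.map_sup] at h1
    have h2 : (l ⊔ m).map (l ⊔ m).mkQ = ⊥ := by
      rw [eq_bot_iff]
      rintro y ⟨x, hx, rfl⟩
      rw [Submodule.mem_bot, Submodule.mkQ_apply, Submodule.Quotient.mk_eq_zero]
      exact hx
    rw [h2, sup_bot_eq] at h1
    exact h1
  obtain ⟨-, hVrank⟩ := finrank_decomp V (l ⊔ m) (by rw [hVtop]; infer_instance) hfinVs
  have hVrank' : Module.finrank 𝕂 ↥V
      = Module.finrank 𝕂 (X ⧸ (l ⊔ m)) + Module.finrank 𝕂 ↥(V ⊓ (l ⊔ m)) := by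
    rw [hVrank, hVtop, finrank_top]
  have keydim : ∀ p q : Submodule 𝕂 X, FiniteDimensional 𝕂 ↥(p ⊓ q) →
      Module.finrank 𝕂 ↥(p ⊓ q) = Module.finrank 𝕂 (X ⧸ (l ⊔ m)) → p ⊔ q = l ⊔ m →
      V ⊓ q = ⊥ →
      FiniteDimensional 𝕂 ↥(p ⊓ (V ⊔ q))
        ∧ Module.finrank 𝕂 ↥(p ⊓ (V ⊔ q)) = Module.finrank 𝕂 ↥V := by
    intro p q hfin hidx hsupq hVq
    have hmapeq : (p ⊓ (V ⊔ q)).map q.mkQ = (V ⊓ (l ⊔ m)).map q.mkQ := by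
      apply le_antisymm
      · rintro _ ⟨x, ⟨hxp, hxVq⟩, rfl⟩
        obtain ⟨v, hv, b, hb, hvb⟩ := Submodule.mem_sup.mp hxVq
        refine Submodule.mem_map.mpr ⟨v, ⟨hv, ?_⟩, ?_⟩
        · rw [← hsupq]
          have hveq : v = x - b := by rw [← hvb]; abel
          rw [hveq]
          exact sub_mem ((le_sup_left : p ≤ p ⊔ q) hxp) ((le_sup_right : q ≤ p ⊔ q) hb)
        · rw [Submodule.mkQ_apply, Submodule.mkQ_apply]
          refine (Submodule.Quotient.eq q).mpr ?_
          have : v - x = -b := by rw [← hvb]; abel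
          rw [this]
          exact neg_mem hb
      · rintro _ ⟨v, ⟨hvV, hvs⟩, rfl⟩
        rw [← hsupq] at hvs
        obtain ⟨a, ha, b, hb, hab⟩ := Submodule.mem_sup.mp hvs
        refine Submodule.mem_map.mpr ⟨a, ⟨ha, ?_⟩, ?_⟩
        · refine Submodule.mem_sup.mpr ⟨v, hvV, -b, neg_mem hb, ?_⟩
          rw [← hab]; abel
        · rw [Submodule.mkQ_apply, Submodule.mkQ_apply]
          refine (Submodule.Quotient.eq q).mpr ?_
          have : a - v = -b := by rw [← hab]; abel
          rw [this]
          exact neg_mem hb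
    have hinf1 : p ⊓ (V ⊔ q) ⊓ q = p ⊓ q := by
      apply le_antisymm
      · intro x hx; exact ⟨hx.1.1, hx.2⟩
      · intro x hx; exact ⟨⟨hx.1, (le_sup_right : q ≤ V ⊔ q) hx.2⟩, hx.2⟩
    have hinf2 : (V ⊓ (l ⊔ m)) ⊓ q = ⊥ := by
      rw [eq_bot_iff, ← hVq]
      intro x hx
      exact ⟨hx.1.1, hx.2⟩
    haveI : FiniteDimensional 𝕂 ↥((V ⊓ (l ⊔ m)).map q.mkQ) := fd_map _ _
    obtain ⟨-, hr2⟩ := finrank_decomp (V ⊓ (l ⊔ m)) q inferInstance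
      (by rw [hinf2]; infer_instance)
    obtain ⟨hfinA, hr1⟩ := finrank_decomp (p ⊓ (V ⊔ q)) q
      (by rw [hmapeq]; infer_instance) (by rw [hinf1]; exact hfin)
    refine ⟨hfinA, ?_⟩
    rw [hmapeq, hinf1] at hr1
    rw [hinf2, finrank_bot, add_zero] at hr2
    omega
  obtain ⟨hfinl₀, hl₀rank⟩ :
      FiniteDimensional 𝕂 ↥l₀ ∧ Module.finrank 𝕂 ↥l₀ = Module.finrank 𝕂 ↥V := by
    rw [hl₀]
    exact keydim l m hfin₁ hindex rfl hVm
  obtain ⟨hfinm₀, hm₀rank⟩ :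
      FiniteDimensional 𝕂 ↥m₀ ∧ Module.finrank 𝕂 ↥m₀ = Module.finrank 𝕂 ↥V := by
    rw [hm₀]
    have hc : m ⊓ l = l ⊓ m := inf_comm m l
    refine keydim m l (by rw [hc]; exact hfin₁) (by rw [hc]; exact hindex)
      (sup_comm m l) hVl
  haveI := hfinl₀
  haveI := hfinm₀
  -- the dual pairing with V
  set Φ : X →ₗ[𝕂] Module.Dual 𝕂 ↥V :=
    { toFun := fun x => (ω x).comp V.subtype
      map_add' := fun x y => by ext v; simp
      map_smul' := fun c x => by ext v; simp } with hΦdef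
  have hΦapp : ∀ (x : X) (v : ↥V), Φ x v = ω x ↑v := fun _ _ => rfl
  have hΦ0 : ∀ {x : X}, (∀ y ∈ V, ω x y = 0) → Φ x = 0 := by
    intro x hx
    ext v
    rw [hΦapp, hx ↑v v.2, LinearMap.zero_apply]
  have hdual : ∀ p : Submodule 𝕂 X, omegaAnn ω p = p → V ⊓ p = ⊥ →
      Module.finrank 𝕂 ↥(Submodule.map Φ p) = Module.finrank 𝕂 ↥V := by
    intro p hp hVp
    have h1 := Subspace.finrank_add_finrank_dualCoannihilator_eq (Submodule.map Φ p)
    have h2 : (Submodule.map Φ p).dualCoannihilator = ⊥ := by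
      rw [eq_bot_iff]
      intro v hv
      rw [Submodule.mem_dualCoannihilator] at hv
      have hv' : ∀ x ∈ p, ω x ↑v = 0 := fun x hx =>
        hv (Φ x) (Submodule.mem_map_of_mem hx)
      have hvp : (v : X) ∈ p := by
        rw [← hp]
        exact mem_omegaAnn.mpr (fun y hy => hsk0 (hv' y hy))
      have : (v : X) ∈ V ⊓ p := ⟨v.2, hvp⟩
      rw [hVp, Submodule.mem_bot] at this
      rw [Submodule.mem_bot]
      exact Subtype.ext this
    rw [h2, finrank_bot, add_zero] at h1
    exact h1
  -- l₀ ⊓ l₁ = ⊥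
  have hmapl : Submodule.map Φ l₀ = Submodule.map Φ l := by
    apply le_antisymm (Submodule.map_mono hl0l)
    rintro _ ⟨x, hx, rfl⟩
    rw [← hlsum] at hx
    obtain ⟨x₀, hx₀, x₁, hx₁, hx01⟩ := Submodule.mem_sup.mp hx
    refine Submodule.mem_map.mpr ⟨x₀, hx₀, ?_⟩
    rw [← hx01, map_add, hΦ0 (hl1V hx₁), add_zero]
  have hrnl := LinearMap.finrank_range_add_finrank_ker (Φ.domRestrict l₀)
  rw [LinearMap.range_domRestrict, hmapl, hdual l hl hVl] at hrnl
  have hkerl : LinearMap.ker (Φ.domRestrict l₀) = ⊥ := by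
    rw [← Submodule.finrank_eq_zero (S := LinearMap.ker (Φ.domRestrict l₀))]
    omega
  have hl0l1 : l₀ ⊓ l₁ = ⊥ := by
    rw [eq_bot_iff]
    rintro x ⟨hx0, hx1⟩
    have hker : (⟨x, hx0⟩ : ↥l₀) ∈ LinearMap.ker (Φ.domRestrict l₀) := by
      rw [LinearMap.mem_ker, LinearMap.domRestrict_apply]
      exact hΦ0 (hl1V hx1)
    rw [hkerl, Submodule.mem_bot] at hker
    rw [Submodule.mem_bot]
    exact congrArg Subtype.val hker
  -- m₀ ⊔ m₁ = m
  have hkerm : LinearMap.ker (Φ.domRestrict m₀) = ⊥ := by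
    rw [eq_bot_iff]
    rintro ⟨x, hx0⟩ hx
    rw [LinearMap.mem_ker, LinearMap.domRestrict_apply] at hx
    have hxV : ∀ y ∈ V, ω x y = 0 := by
      intro y hy
      have := LinearMap.congr_fun hx ⟨y, hy⟩
      rwa [hΦapp, LinearMap.zero_apply] at this
    have hxm1 : x ∈ m₁ := by
      rw [hm₁]
      exact ⟨mem_omegaAnn.mpr hxV, hm0m hx0⟩
    have hb : x ∈ m₀ ⊓ m₁ := ⟨hx0, hxm1⟩
    rw [hm0m1, Submodule.mem_bot] at hb
    rw [Submodule.mem_bot]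
    exact Subtype.ext hb
  have hrnm := LinearMap.finrank_range_add_finrank_ker (Φ.domRestrict m₀)
  rw [LinearMap.range_domRestrict, hkerm, finrank_bot, add_zero] at hrnm
  have hmapm : Submodule.map Φ m₀ = Submodule.map Φ m := by
    apply Submodule.eq_of_le_of_finrank_le (Submodule.map_mono hm0m)
    rw [hrnm, hdual m hm hVm, hm₀rank]
  have hmsum : m₀ ⊔ m₁ = m := by
    refine le_antisymm (sup_le hm0m hm1m) ?_
    intro x hx
    have hmem : Φ x ∈ Submodule.map Φ m₀ := by
      rw [hmapm]; exact Submodule.mem_map_of_mem hx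
    obtain ⟨x₀, hx₀, hΦx⟩ := hmem
    have hx1 : x - x₀ ∈ m₁ := by
      rw [hm₁]
      refine ⟨mem_omegaAnn.mpr ?_, sub_mem hx (hm0m hx₀)⟩
      intro y hy
      have h := LinearMap.congr_fun hΦx (⟨y, hy⟩ : ↥V)
      rw [hΦapp, hΦapp] at h
      rw [map_sub, LinearMap.sub_apply, h, sub_self]
    have hx' : x = x₀ + (x - x₀) := by abel
    rw [hx']
    exact Submodule.mem_sup.mpr ⟨x₀, hx₀, x - x₀, hx1, rfl⟩
  -- l₁ ⊓ m₁ = ⊥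
  have hl1m1 : l₁ ⊓ m₁ = ⊥ := by
    rw [eq_bot_iff]
    rintro x ⟨hx1, hx2⟩
    have hx0 : x = 0 := hkill x (hl1V hx1)
      (fun y hy => hlmem.mp (hl1l hx1) y (hl1l hy)) (hmmem.mp (hm1m hx2))
    rw [Submodule.mem_bot]
    exact hx0
  -- X₀ ⊓ X₁ = ⊥
  have hX0X1inf : X₀ ⊓ X₁ = ⊥ := by
    rw [eq_bot_iff]
    rintro x ⟨hx0, hx1⟩
    rw [hX₁] at hx1
    obtain ⟨a, ha, b, hb, hab⟩ := Submodule.mem_sup.mp hx1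
    have hbm0 : b ∈ m₀ := by
      rw [hm₀]
      refine ⟨hm1m hb, ?_⟩
      have hbeq : b = x - a := by rw [← hab]; abel
      rw [hbeq]
      exact sub_mem (hX0split hx0).1 ((le_sup_right : l ≤ V ⊔ l) (hl1l ha))
    have hb0 : b = 0 := by
      have hbb : b ∈ m₀ ⊓ m₁ := ⟨hbm0, hb⟩
      rw [hm0m1, Submodule.mem_bot] at hbb
      exact hbb
    have hxa : x = a := by rw [← hab, hb0, add_zero]
    have hal0 : a ∈ l₀ := by
      rw [hl₀]
      exact ⟨hl1l ha, hxa ▸ (hX0split hx0).2⟩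
    have haa : a ∈ l₀ ⊓ l₁ := ⟨hal0, ha⟩
    rw [hl0l1, Submodule.mem_bot] at haa
    rw [Submodule.mem_bot, hxa]
    exact haa
  -- X₀ ⊔ X₁ = ⊤
  have hl1X1 : l₁ ≤ X₁ := hX₁ ▸ (le_sup_left : l₁ ≤ l₁ ⊔ m₁)
  have hm1X1 : m₁ ≤ X₁ := hX₁ ▸ (le_sup_right : m₁ ≤ l₁ ⊔ m₁)
  have hX0X1sup : X₀ ⊔ X₁ = ⊤ := by
    rw [eq_top_iff, ← hspan]
    refine sup_le (sup_le ?_ ?_) ?_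
    · exact le_trans hX0V le_sup_left
    · exact le_trans hl1X1 le_sup_right
    · rw [← hmsum]
      exact sup_le (le_trans hX0m0 le_sup_left) (le_trans hm1X1 le_sup_right)
  -- nondegeneracy
  have hnd0 : ∀ x ∈ X₀, (∀ y ∈ X₀, ω x y = 0) → x = 0 := by
    intro x hx hann
    apply hkill
    · intro y hy; exact hann y (hX0V hy)
    · exact hX0l1 x hx
    · intro y hy
      rw [← hmsum] at hy
      obtain ⟨p, hp, q, hq, hpq⟩ := Submodule.mem_sup.mp hy
      rw [← hpq, map_add, hann p (hX0m0 hp), hX0m1 x hx q hq, add_zero]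
  have hnd1 : ∀ x ∈ X₁, (∀ y ∈ X₁, ω x y = 0) → x = 0 := by
    intro x hx hann
    apply hkill
    · intro y hy; exact hX1X0 x hx y (hX0V hy)
    · intro y hy; exact hann y (hl1X1 hy)
    · intro y hy
      rw [← hmsum] at hy
      obtain ⟨p, hp, q, hq, hpq⟩ := Submodule.mem_sup.mp hy
      rw [← hpq, map_add, hX1X0 x hx p (hX0m0 hp), hann q (hm1X1 hq), add_zero]
  -- (a)
  have ha1 : X₀ = omegaAnn ω X₁ := by
    refine le_antisymm (fun x hx => mem_omegaAnn.mpr (hX0X1 x hx)) ?_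
    intro x hx
    have hxt : x ∈ X₀ ⊔ X₁ := by rw [hX0X1sup]; trivial
    obtain ⟨p, hp, q, hq, hpq⟩ := Submodule.mem_sup.mp hxt
    have hq0 : q = 0 := by
      apply hnd1 q hq
      intro y hy
      have hqeq : q = x - p := by rw [← hpq]; abel
      rw [hqeq, map_sub, LinearMap.sub_apply, mem_omegaAnn.mp hx y hy,
        hX0X1 p hp y hy, sub_zero]
    rw [← hpq, hq0, add_zero]
    exact hp
  have ha2 : X₁ = omegaAnn ω X₀ := by
    refine le_antisymm (fun x hx => mem_omegaAnn.mpr (hX1X0 x hx)) ?_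
    intro x hx
    have hxt : x ∈ X₀ ⊔ X₁ := by rw [hX0X1sup]; trivial
    obtain ⟨p, hp, q, hq, hpq⟩ := Submodule.mem_sup.mp hxt
    have hp0 : p = 0 := by
      apply hnd0 p hp
      intro y hy
      have hpeq : p = x - q := by rw [← hpq]; abel
      rw [hpeq, map_sub, LinearMap.sub_apply, mem_omegaAnn.mp hx y hy,
        hX1X0 q hq y hy, sub_zero]
    rw [← hpq, hp0, zero_add]
    exact hq
  -- Lagrangian conditions
  have hc1 : omegaAnn ω l₀ ⊓ X₀ = l₀ := by
    apply le_antisymm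
    · rintro x ⟨hx1, hx0⟩
      have hxl : x ∈ l := by
        apply hlmem.mpr
        intro y hy
        rw [← hlsum] at hy
        obtain ⟨p, hp, q, hq, hpq⟩ := Submodule.mem_sup.mp hy
        rw [← hpq, map_add, mem_omegaAnn.mp hx1 p hp, hX0l1 x hx0 q hq, add_zero]
      rw [hl₀]
      exact ⟨hxl, (hX0split hx0).2⟩
    · intro x hx
      exact ⟨mem_omegaAnn.mpr (fun y hy => hlmem.mp (hl0l hx) y (hl0l hy)), hX0l0 hx⟩
  have hc2 : omegaAnn ω m₀ ⊓ X₀ = m₀ := by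
    apply le_antisymm
    · rintro x ⟨hx1, hx0⟩
      have hxm : x ∈ m := by
        apply hmmem.mpr
        intro y hy
        rw [← hmsum] at hy
        obtain ⟨p, hp, q, hq, hpq⟩ := Submodule.mem_sup.mp hy
        rw [← hpq, map_add, mem_omegaAnn.mp hx1 p hp, hX0m1 x hx0 q hq, add_zero]
      rw [hm₀]
      exact ⟨hxm, (hX0split hx0).1⟩
    · intro x hx
      exact ⟨mem_omegaAnn.mpr (fun y hy => hmmem.mp (hm0m hx) y (hm0m hy)), hX0m0 hx⟩
  have hc3 : omegaAnn ω l₁ ⊓ X₁ = l₁ := by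
    apply le_antisymm
    · rintro x ⟨hx1, hxX1⟩
      rw [hX₁] at hxX1
      obtain ⟨a, ha, b, hb, hab⟩ := Submodule.mem_sup.mp hxX1
      have hxV : ∀ y ∈ V, ω x y = 0 := by
        intro y hy
        rw [← hab, map_add, LinearMap.add_apply, hl1V ha y hy, hm1V hb y hy, add_zero]
      have hxl : x ∈ l := by
        apply hlmem.mpr
        intro y hy
        rw [← hlsum] at hy
        obtain ⟨p, hp, q, hq, hpq⟩ := Submodule.mem_sup.mp hy
        have h1 : ω x p = 0 := by
          obtain ⟨v, hv, c, hc, hvc⟩ := Submodule.mem_sup.mp (hl0Vm hp)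
          have hbp : ω b p = 0 := by
            rw [← hvc, map_add, hm1V hb v hv, hmmem.mp (hm1m hb) c hc, add_zero]
          have hap : ω a p = 0 := hlmem.mp (hl1l ha) p (hl0l hp)
          rw [← hab, map_add, LinearMap.add_apply, hap, hbp, add_zero]
        rw [← hpq, map_add, h1, mem_omegaAnn.mp hx1 q hq, add_zero]
      rw [hl₁]
      exact ⟨mem_omegaAnn.mpr hxV, hxl⟩
    · intro x hx
      exact ⟨mem_omegaAnn.mpr (fun y hy => hlmem.mp (hl1l hx) y (hl1l hy)), hl1X1 hx⟩
  have hc4 : omegaAnn ω m₁ ⊓ X₁ = m₁ := by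
    apply le_antisymm
    · rintro x ⟨hx1, hxX1⟩
      rw [hX₁] at hxX1
      obtain ⟨a, ha, b, hb, hab⟩ := Submodule.mem_sup.mp hxX1
      have hxV : ∀ y ∈ V, ω x y = 0 := by
        intro y hy
        rw [← hab, map_add, LinearMap.add_apply, hl1V ha y hy, hm1V hb y hy, add_zero]
      have hxm : x ∈ m := by
        apply hmmem.mpr
        intro y hy
        rw [← hmsum] at hy
        obtain ⟨p, hp, q, hq, hpq⟩ := Submodule.mem_sup.mp hy
        have h1 : ω x p = 0 := by
          obtain ⟨v, hv, c, hc, hvc⟩ := Submodule.mem_sup.mp (hm0Vl hp)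
          have hapv : ω a p = 0 := by
            rw [← hvc, map_add, hl1V ha v hv, hlmem.mp (hl1l ha) c hc, add_zero]
          have hbp : ω b p = 0 := hmmem.mp (hm1m hb) p (hm0m hp)
          rw [← hab, map_add, LinearMap.add_apply, hapv, hbp, add_zero]
        rw [← hpq, map_add, h1, mem_omegaAnn.mp hx1 q hq, add_zero]
      rw [hm₁]
      exact ⟨mem_omegaAnn.mpr hxV, hxm⟩
    · intro x hx
      exact ⟨mem_omegaAnn.mpr (fun y hy => hmmem.mp (hm1m hx) y (hm1m hy)), hm1X1 hx⟩
  -- ranks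
  have hbrank1 : Module.rank 𝕂 ↥V = Module.rank 𝕂 ↥l₀ := by
    rw [← Module.finrank_eq_rank, ← Module.finrank_eq_rank, hl₀rank]
  have hbrank2 : Module.rank 𝕂 ↥V = Module.rank 𝕂 ↥m₀ := by
    rw [← Module.finrank_eq_rank, ← Module.finrank_eq_rank, hm₀rank]
  have hX0rank : Module.finrank 𝕂 ↥X₀ = Module.finrank 𝕂 ↥V + Module.finrank 𝕂 ↥V := by
    have h := Submodule.finrank_sup_add_finrank_inf_eq V l₀
    rw [hVl0sup, hVl0inf, finrank_bot, add_zero, hl₀rank] at h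
    exact h
  haveI hfinX₀ : FiniteDimensional 𝕂 ↥X₀ := by
    rw [← hVl0sup]; infer_instance
  have hbrank3 : Module.rank 𝕂 ↥X₀ = 2 * Module.rank 𝕂 ↥V := by
    rw [← Module.finrank_eq_rank, ← Module.finrank_eq_rank, hX0rank]
    push_cast
    ring
  exact ⟨⟨ha1, ha2⟩,
    ⟨hVl0sup, hVl0inf, hVm0sup, hVm0inf, hl1m1, hbrank1, hbrank2, hbrank3,
      hX0X1sup, hX0X1inf⟩,
    ⟨hlsum, hl0l1, hmsum, hm0m1, hnd0, hnd1, hc1, hc2, hc3, hc4⟩⟩
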